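/- Let d ≥ 2 and let A_{d+1} be the (d+1)×(d+1) row-stochastic matrix with 0 on the diagonal and 1/d in every off-diagonal entry. Suppose A_{d+1} has a quantum implementation in dimension d. Then the d×d identity matrix I_d and A_{d+1} are incompatible in C(Q_d): there is no row-stochastic matrix C with a quantum implementation in dimension d such that both I_d ⪯ C and A_{d+1} ⪯ C. -/

import Mathlib

/-!
If `I_d ⪯ C` with `C` realised by states `ρ k` and effects `M l` in dimension `d`, then mixing the
`ρ k` with `L` and coarse-graining the `M l` with `R` yields `d` states `σ i` and a `d`-outcome
measurement `N j` that discriminate them perfectly. In dimension `d` this forces `N = σ`, with the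
`σ i` pure and summing to `1`. Every effect `M l` feeds some outcome `j`, hence is annihilated by
all `σ i` with `i ≠ j` and is a multiple of `σ j`; so `C` factors through `ℝ^d` and has rank at
most `d`. Ultraweak majorization cannot increase rank, while `A_{d+1}` is invertible.
-/

open Matrix BigOperators
open scoped ComplexOrder

/-- A real matrix is row-stochastic if all entries are nonnegative
and each row sums to 1. -/
def RowStochastic {m n : ℕ} (A : Matrix (Fin m) (Fin n) ℝ) : Prop :=
  (∀ i j, 0 ≤ A i j) ∧ ∀ i, ∑ j, A i j = 1

/-- `A` admits a quantum implementation in dimension `d`: there are states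
`ρ i` (PSD, trace one) and POVM effects `M j` (PSD, summing to the identity)
with `A i j = Re (tr (ρ i * M j))`. -/
def QuantumImpl (d m n : ℕ) (A : Matrix (Fin m) (Fin n) ℝ) : Prop :=
  ∃ (ρ : Fin m → Matrix (Fin d) (Fin d) ℂ) (M : Fin n → Matrix (Fin d) (Fin d) ℂ),
    (∀ i, (ρ i).PosSemidef ∧ (ρ i).trace = 1) ∧
    (∀ j, (M j).PosSemidef) ∧ (∑ j, M j = 1) ∧
    (∀ i j, A i j = ((ρ i * M j).trace).re)

/-- The max monotone `λmax(A) = Σ_j max_i A i j`. -/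
noncomputable def lmax {m n : ℕ} (A : Matrix (Fin m) (Fin n) ℝ) : ℝ :=
  ∑ j, ⨆ i, A i j

/-- The min monotone `λmin(A) = −Σ_j min_i A i j`. -/
noncomputable def lmin {m n : ℕ} (A : Matrix (Fin m) (Fin n) ℝ) : ℝ :=
  - ∑ j, ⨅ i, A i j

/-- `UWMaj B A` : `B` is ultraweakly majorized by `A` (i.e. `B ⪯ A`),
meaning `B = L * A * R` for some row-stochastic `L`, `R`. -/
def UWMaj {m' n' m n : ℕ} (B : Matrix (Fin m') (Fin n') ℝ)
    (A : Matrix (Fin m) (Fin n) ℝ) : Prop :=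
  ∃ (L : Matrix (Fin m') (Fin m) ℝ) (R : Matrix (Fin n) (Fin n') ℝ),
    RowStochastic L ∧ RowStochastic R ∧ L * A * R = B

namespace Matrix
open scoped MatrixOrder
variable {n : Type*} [Fintype n] [DecidableEq n] {A B : Matrix n n ℂ}

theorem PosSemidef.trace_mul_nonneg (hA : A.PosSemidef) (hB : B.PosSemidef) :
    0 ≤ (A * B).trace := by
  obtain ⟨C, rfl⟩ := CStarAlgebra.nonneg_iff_eq_star_mul_self.mp hB.nonneg
  rw [star_eq_conjTranspose, ← mul_assoc, trace_mul_cycle]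
  exact (hA.mul_mul_conjTranspose_same C).trace_nonneg

theorem PosSemidef.mul_eq_zero_of_trace_mul_eq_zero (hA : A.PosSemidef) (hB : B.PosSemidef)
    (h : (A * B).trace = 0) : A * B = 0 := by
  obtain ⟨D, rfl⟩ := CStarAlgebra.nonneg_iff_eq_star_mul_self.mp hA.nonneg
  obtain ⟨C, rfl⟩ := CStarAlgebra.nonneg_iff_eq_star_mul_self.mp hB.nonneg
  simp only [star_eq_conjTranspose] at *
  have hDC : D * Cᴴ = 0 := by
    rw [← trace_conjTranspose_mul_self_eq_zero_iff, ← h, conjTranspose_mul,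
      conjTranspose_conjTranspose, Matrix.mul_assoc, trace_mul_comm C]
    simp only [Matrix.mul_assoc]
  calc Dᴴ * D * (Cᴴ * C) = Dᴴ * (D * Cᴴ) * C := by simp only [Matrix.mul_assoc]
    _ = 0 := by rw [hDC, Matrix.mul_zero, Matrix.zero_mul]

theorem PosSemidef.trace_mul_eq_ofReal_re (hA : A.PosSemidef) (hB : B.PosSemidef) :
    (A * B).trace = ((A * B).trace.re : ℂ) :=
  Complex.ext rfl (by simpa using (Complex.nonneg_iff.mp (hA.trace_mul_nonneg hB)).2.symm)

theorem PosSemidef.one_sub_of_trace_eq_one (hA : A.PosSemidef) (htr : A.trace = 1) :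
    (1 - A).PosSemidef := by
  have hsum : ∑ i, hA.1.eigenvalues i = 1 := by
    have := hA.1.trace_eq_sum_eigenvalues.symm.trans htr
    simpa using congrArg Complex.re this
  have hle : ∀ x ∈ spectrum ℝ A, x ≤ 1 := by
    rw [hA.1.spectrum_real_eq_range_eigenvalues]
    rintro _ ⟨i, rfl⟩
    exact hsum ▸ Finset.single_le_sum (fun j _ => hA.eigenvalues_nonneg j) (Finset.mem_univ i)
  simpa [le_iff] using le_algebraMap_of_spectrum_le hle hA.1.isSelfAdjoint

omit [DecidableEq n] in
theorem IsHermitian.eq_zero_of_mul_self_of_trace_eq_zero {Q : Matrix n n ℂ} (hQ : Q.IsHermitian)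
    (hidem : Q * Q = Q) (htr : Q.trace = 0) : Q = 0 := by
  rwa [← trace_conjTranspose_mul_self_eq_zero_iff, hQ.eq, hidem]

theorem IsHermitian.mul_mul_eq_trace_mul_smul {σ : Matrix n n ℂ} (hσ : σ.IsHermitian)
    (hidem : σ * σ = σ) (htr : σ.trace = 1) (X : Matrix n n ℂ) :
    σ * X * σ = (σ * X).trace • σ := by
  obtain ⟨j, -, hj⟩ : ∃ j ∈ Finset.univ, σ j j ≠ 0 :=
    Finset.exists_ne_zero_of_sum_ne_zero (by simpa [trace] using htr.trans_ne one_ne_zero)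
  set E : Matrix n n ℂ := single j j 1
  set K := σ * E * σ
  have hE : ∀ Y, E * Y * E = Y j j • E := fun Y => by simp [E]
  have hσK : σ * K = K := by simp only [K, ← Matrix.mul_assoc, hidem]
  have hKσ : K * σ = K := by simp only [K, Matrix.mul_assoc, hidem]
  have hKK : K * K = σ j j • K := by
    calc K * K = σ * (E * (σ * σ) * E) * σ := by simp only [K, Matrix.mul_assoc]
      _ = σ j j • K := by rw [hidem, hE, mul_smul_comm, smul_mul_assoc]
  have hKH : Kᴴ = K := by simp [K, E, hσ.eq, Matrix.mul_assoc]
  have htrK : K.trace = σ j j := by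
    rw [trace_mul_comm, ← Matrix.mul_assoc, hidem, trace_mul_comm, trace_single_mul, one_smul]
  have hstar : star (σ j j)⁻¹ = (σ j j)⁻¹ := by rw [star_inv₀, hσ.apply j j]
  -- `σ` is the rank-one matrix `(σ j j)⁻¹ • K`: their difference is a traceless projection.
  have hσE : σ = (σ j j)⁻¹ • K := by
    rw [← sub_eq_zero]
    refine IsHermitian.eq_zero_of_mul_self_of_trace_eq_zero ?_ ?_ ?_
    · rw [IsHermitian, conjTranspose_sub, conjTranspose_smul, hKH, hσ.eq, hstar]
    · simp only [sub_mul, mul_sub, smul_mul_assoc, mul_smul_comm, hidem, hσK, hKσ, hKK, smul_smul,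
        inv_mul_cancel₀ hj, one_smul, sub_self, smul_zero, sub_zero]
    · rw [trace_sub, trace_smul, htrK, htr, smul_eq_mul, inv_mul_cancel₀ hj, sub_self]
  obtain ⟨s, hs⟩ : ∃ s : ℂ, σ * X * σ = s • σ := by
    refine ⟨(σ j j)⁻¹ * (σ * X * σ) j j, ?_⟩
    calc σ * X * σ = (σ j j)⁻¹ • (σ j j)⁻¹ • (σ * (E * (σ * X * σ) * E) * σ) := by
          conv_lhs => rw [hσE]
          simp only [K, smul_mul_assoc, mul_smul_comm, Matrix.mul_assoc]
      _ = ((σ j j)⁻¹ * (σ * X * σ) j j) • ((σ j j)⁻¹ • K) := by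
          rw [hE, mul_smul_comm, smul_mul_assoc, smul_smul, smul_smul, smul_smul]
          congr 1
          ring
      _ = _ := by rw [← hσE]
  have hstr : (σ * X).trace = s := by
    rw [← hidem, Matrix.mul_assoc, trace_mul_comm σ, hs, trace_smul, htr,
      smul_eq_mul, mul_one]
  rw [hs, hstr]

theorem PosSemidef.mul_eq_zero_of_trace_mul_sum_eq_zero {κ : Type*} [Fintype κ]
    {M : κ → Matrix n n ℂ} {w : κ → ℝ} (hA : A.PosSemidef) (hM : ∀ l, (M l).PosSemidef)
    (hw : ∀ l, 0 ≤ w l) (h : (A * ∑ l, w l • M l).trace = 0) {l : κ} (hl : 0 < w l) :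
    A * M l = 0 := by
  have hterm : ∀ l ∈ Finset.univ, 0 ≤ (A * (w l • M l)).trace := fun l _ => by
    rw [mul_smul_comm, trace_smul]
    exact smul_nonneg (hw l) (hA.trace_mul_nonneg (hM l))
  rw [Matrix.mul_sum, trace_sum] at h
  have := (Finset.sum_eq_zero_iff_of_nonneg hterm).mp h l (Finset.mem_univ l)
  rw [mul_smul_comm, trace_smul, smul_eq_zero] at this
  exact hA.mul_eq_zero_of_trace_mul_eq_zero (hM l) (this.resolve_left hl.ne')

theorem eq_trace_mul_smul_of_mul_eq_zero {ι : Type*} [Fintype ι] {σ : ι → Matrix n n ℂ}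
    (hσ : ∀ i, (σ i).IsHermitian) (hsum : ∑ i, σ i = 1) {t : ι} (hidem : σ t * σ t = σ t)
    (htr : (σ t).trace = 1) {M : Matrix n n ℂ} (hM : M.IsHermitian) (h : ∀ i ≠ t, σ i * M = 0) :
    M = (σ t * M).trace • σ t := by
  have hleft : σ t * M = M := by
    calc σ t * M = ∑ i, σ i * M := (Finset.sum_eq_single t (fun i _ hi => h i hi) (by simp)).symm
      _ = M := by rw [← Finset.sum_mul, hsum, Matrix.one_mul]
  have hright : M * σ t = M := by
    simpa [conjTranspose_mul, hM.eq, (hσ t).eq] using congrArg conjTranspose hleft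
  calc M = σ t * M * σ t := by rw [hleft, hright]
    _ = _ := (hσ t).mul_mul_eq_trace_mul_smul hidem htr M

end Matrix

theorem RowStochastic.exists_pos {m n : ℕ} {R : Matrix (Fin m) (Fin n) ℝ} (hR : RowStochastic R)
    (i : Fin m) : ∃ j, 0 < R i j := by
  obtain ⟨j, -, hj⟩ := Finset.exists_ne_zero_of_sum_ne_zero ((hR.2 i).trans_ne one_ne_zero)
  exact ⟨j, (hR.1 i j).lt_of_ne' hj⟩

theorem UWMaj.rank_le {m' n' m n : ℕ} {B : Matrix (Fin m') (Fin n') ℝ}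
    {A : Matrix (Fin m) (Fin n) ℝ} (h : UWMaj B A) : B.rank ≤ A.rank := by
  obtain ⟨L, R, -, -, rfl⟩ := h
  exact (rank_mul_le_left _ _).trans (rank_mul_le_right _ _)

theorem antidist_rank_eq {d : ℕ} (hd : d ≠ 0) {A : Matrix (Fin (d + 1)) (Fin (d + 1)) ℝ}
    (hA : ∀ i j, A i j = if i = j then 0 else 1 / (d : ℝ)) : A.rank = d + 1 := by
  set J : Matrix (Fin (d + 1)) (Fin (d + 1)) ℝ := of fun _ _ => 1
  have hJJ : J * J = ((d : ℝ) + 1) • J := by ext; simp [J, mul_apply]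
  have hAJ : A = (d : ℝ)⁻¹ • (J - 1) := by
    ext i j
    by_cases h : i = j <;> simp [J, hA, h, one_apply]
  have hd' : (d : ℝ) ≠ 0 := Nat.cast_ne_zero.mpr hd
  have hinv : A * (J - (d : ℝ) • 1) = 1 := by
    rw [hAJ, smul_mul_assoc, sub_mul, mul_sub, mul_sub, hJJ]
    simp only [Matrix.one_mul, Matrix.mul_one, mul_smul_comm]
    rw [show ((d : ℝ) + 1) • J - (d : ℝ) • J - (J - (d : ℝ) • 1) = (d : ℝ) • 1 by module,
      smul_smul, inv_mul_cancel₀ hd', one_smul]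
  simpa using rank_of_isUnit A (IsUnit.of_mul_eq_one _ hinv)

section Quantum

variable {n ι : Type*}

noncomputable def weightedSum {a b : ℕ} (W : Matrix (Fin a) (Fin b) ℝ) (ρ : Fin b → Matrix n n ℂ)
    (i : Fin a) : Matrix n n ℂ :=
  ∑ k, W i k • ρ k

theorem posSemidef_weightedSum {a b : ℕ} {W : Matrix (Fin a) (Fin b) ℝ}
    {ρ : Fin b → Matrix n n ℂ} (hW : ∀ i k, 0 ≤ W i k) (hρ : ∀ k, (ρ k).PosSemidef) (i : Fin a) :
    (weightedSum W ρ i).PosSemidef :=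
  posSemidef_sum _ fun k _ => (hρ k).smul (hW i k)

def IsPOVM [DecidableEq n] [Fintype ι] (M : ι → Matrix n n ℂ) : Prop :=
  (∀ i, (M i).PosSemidef) ∧ ∑ i, M i = 1

theorem isPOVM_weightedSum_transpose [DecidableEq n] {a b : ℕ} {R : Matrix (Fin b) (Fin a) ℝ}
    {M : Fin b → Matrix n n ℂ} (hR : RowStochastic R) (hM : IsPOVM M) :
    IsPOVM (weightedSum Rᵀ M) := by
  refine ⟨posSemidef_weightedSum (fun j l => hR.1 l j) hM.1, ?_⟩
  simp only [weightedSum, transpose_apply]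
  rw [Finset.sum_comm]
  simp only [← Finset.sum_smul, hR.2, one_smul]
  exact hM.2

variable [Fintype n]

def IsState (ρ : Matrix n n ℂ) : Prop := ρ.PosSemidef ∧ ρ.trace = 1

theorem isState_weightedSum {a b : ℕ} {L : Matrix (Fin a) (Fin b) ℝ}
    {ρ : Fin b → Matrix n n ℂ} (hL : RowStochastic L) (hρ : ∀ k, IsState (ρ k)) (i : Fin a) :
    IsState (weightedSum L ρ i) := by
  refine ⟨posSemidef_weightedSum hL.1 (fun k => (hρ k).1) i, ?_⟩
  simp only [weightedSum, trace_sum, trace_smul, (hρ _).2, Complex.real_smul, mul_one]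
  exact_mod_cast hL.2 i

theorem re_trace_weightedSum_mul_weightedSum {a b p q : ℕ} {C : Matrix (Fin p) (Fin q) ℝ}
    {ρ : Fin p → Matrix n n ℂ} {M : Fin q → Matrix n n ℂ}
    (hC : ∀ k l, C k l = (ρ k * M l).trace.re) (L : Matrix (Fin a) (Fin p) ℝ)
    (R : Matrix (Fin q) (Fin b) ℝ) (i : Fin a) (j : Fin b) :
    (weightedSum L ρ i * weightedSum Rᵀ M j).trace.re = (L * C * R) i j := by
  rw [weightedSum, weightedSum, Finset.sum_mul_sum]
  simp only [trace_sum, smul_mul_smul_comm, trace_smul, Complex.re_sum, Complex.smul_re, ← hC,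
    transpose_apply, smul_eq_mul, mul_apply, Finset.sum_mul]
  rw [Finset.sum_comm]
  exact Finset.sum_congr rfl fun k _ => Finset.sum_congr rfl fun l _ => by ring

variable [DecidableEq n] [Fintype ι]

theorem IsPOVM.mul_eq_self {σ : Matrix n n ℂ} {N : ι → Matrix n n ℂ} (hσ : σ.PosSemidef)
    (hN : IsPOVM N) {i : ι} (h : ∀ j ≠ i, (σ * N j).trace = 0) : σ * N i = σ := by
  have hoff : ∀ j ∈ Finset.univ, j ≠ i → σ * N j = 0 := fun j _ hj =>
    hσ.mul_eq_zero_of_trace_mul_eq_zero (hN.1 j) (h j hj)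
  calc σ * N i = ∑ j, σ * N j := (Finset.sum_eq_single i hoff (by simp)).symm
    _ = σ := by rw [← Finset.mul_sum, hN.2, Matrix.mul_one]

theorem IsPOVM.eq_of_trace_mul_eq_ite [DecidableEq ι] {σ N : ι → Matrix n n ℂ}
    (hσ : ∀ i, IsState (σ i)) (hN : IsPOVM N) (hcard : Fintype.card n ≤ Fintype.card ι)
    (hdisc : ∀ i j, (σ i * N j).trace = if i = j then 1 else 0) : N = σ := by
  have hσN : ∀ i, σ i * N i = σ i := fun i =>
    hN.mul_eq_self (hσ i).1 fun j hj => by rw [hdisc, if_neg hj.symm]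
  -- `tr (N i) ≥ tr (σ i * N i) = 1` as `σ i ≤ 1`, while the traces of the `N i` add up to `card n`.
  have hgap : ∀ i, ((1 - σ i) * N i).trace = (N i).trace - 1 := fun i => by
    rw [Matrix.sub_mul, Matrix.one_mul, trace_sub, hdisc, if_pos rfl]
  have hnonneg : ∀ i ∈ Finset.univ, 0 ≤ (N i).trace - 1 := fun i _ =>
    hgap i ▸ ((hσ i).1.one_sub_of_trace_eq_one (hσ i).2).trace_mul_nonneg (hN.1 i)
  have hsum : ∑ i, ((N i).trace - 1) ≤ 0 := by
    rw [Finset.sum_sub_distrib, ← trace_sum, hN.2, trace_one]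
    simpa using hcard
  funext i
  have hzero : (1 - σ i) * N i = 0 := by
    refine ((hσ i).1.one_sub_of_trace_eq_one (hσ i).2).mul_eq_zero_of_trace_mul_eq_zero (hN.1 i) ?_
    rw [hgap]
    exact (Finset.sum_eq_zero_iff_of_nonneg hnonneg).mp
      (le_antisymm hsum (Finset.sum_nonneg hnonneg)) i (Finset.mem_univ i)
  rw [Matrix.sub_mul, Matrix.one_mul, sub_eq_zero] at hzero
  rw [hzero, hσN]

theorem rank_le_card_of_forall_eq_smul {κ ν : Type*} [Fintype ν]
    {C : Matrix κ ν ℝ} {ρ : κ → Matrix n n ℂ} {M : ν → Matrix n n ℂ}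
    (hC : ∀ k l, C k l = (ρ k * M l).trace.re) (σ : ι → Matrix n n ℂ) (t : ν → ι) (c : ν → ℝ)
    (hM : ∀ l, M l = (c l : ℂ) • σ (t l)) : C.rank ≤ Fintype.card ι := by
  classical
  set U : Matrix κ ι ℝ := of fun k s => (ρ k * σ s).trace.re
  have hCU : C = U.submatrix id t * diagonal c := by
    ext k l
    simp [U, hC, hM, mul_diagonal, mul_comm]
  calc C.rank ≤ (U.submatrix id t).rank := hCU ▸ rank_mul_le_left _ _
    _ ≤ U.rank := rank_submatrix_le _ _ _
    _ ≤ Fintype.card ι := rank_le_card_width U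

theorem QuantumImpl.rank_le_of_uwMaj_one {d p q : ℕ} {C : Matrix (Fin p) (Fin q) ℝ}
    (hC : QuantumImpl d p q C) (hI : UWMaj (1 : Matrix (Fin d) (Fin d) ℝ) C) : C.rank ≤ d := by
  obtain ⟨ρ, M, hρ, hMpsd, hMsum, hCρM⟩ := hC
  obtain ⟨L, R, hL, hR, hLCR⟩ := hI
  set σ := weightedSum L ρ
  set N := weightedSum Rᵀ M
  have hσ : ∀ i, IsState (σ i) := isState_weightedSum hL hρ
  have hN : IsPOVM N := isPOVM_weightedSum_transpose hR ⟨hMpsd, hMsum⟩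
  have hdisc : ∀ i j, (σ i * N j).trace = if i = j then 1 else 0 := fun i j => by
    rw [(hσ i).1.trace_mul_eq_ofReal_re (hN.1 j), re_trace_weightedSum_mul_weightedSum hCρM,
      hLCR, one_apply]
    split_ifs <;> simp
  have hNσ : N = σ := hN.eq_of_trace_mul_eq_ite hσ (by simp) hdisc
  have hidem : ∀ i, σ i * σ i = σ i := fun i => by
    simpa [hNσ] using hN.mul_eq_self (hσ i).1 (i := i) fun j hj => by rw [hdisc, if_neg hj.symm]
  -- Each effect `M l` feeds some outcome `t l`, so it lies under the pure state `σ (t l)`.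
  choose t ht using hR.exists_pos
  have hM : ∀ l, M l = ((σ (t l) * M l).trace.re : ℂ) • σ (t l) := fun l => by
    rw [← (hσ _).1.trace_mul_eq_ofReal_re (hMpsd l)]
    refine eq_trace_mul_smul_of_mul_eq_zero (fun i => (hσ i).1.1) (hNσ ▸ hN.2) (hidem _) (hσ _).2
      (hMpsd l).1 fun i hi => (hσ i).1.mul_eq_zero_of_trace_mul_sum_eq_zero hMpsd
        (fun l' => hR.1 l' (t l)) ?_ (ht l)
    have := hdisc i (t l)
    rwa [if_neg hi] at this
  simpa using rank_le_card_of_forall_eq_smul hCρM σ t _ hM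

end Quantum

theorem id_and_antidist_incompatible_general (d : ℕ) (hd : 2 ≤ d)
    (A : Matrix (Fin (d + 1)) (Fin (d + 1)) ℝ)
    (hAdef : ∀ i j, A i j = if i = j then 0 else 1 / (d : ℝ)) :
    ¬ ∃ (p q : ℕ) (C : Matrix (Fin p) (Fin q) ℝ),
        RowStochastic C ∧ QuantumImpl d p q C ∧
        UWMaj (1 : Matrix (Fin d) (Fin d) ℝ) C ∧ UWMaj A C := by
  rintro ⟨p, q, C, -, hQC, hIC, hAC⟩
  have hrank := hAC.rank_le.trans (hQC.rank_le_of_uwMaj_one hIC)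
  rw [antidist_rank_eq (by omega) hAdef] at hrank
  omega

/-- `I_d` and the antidistinguishability matrix `A_{d+1}` are
incompatible in `C(Q_d)`: no quantum-implementable (in dimension `d`)
row-stochastic matrix `C` ultraweakly majorizes both. -/
theorem id_and_antidist_incompatible (d : ℕ) (hd : 2 ≤ d)
    (A : Matrix (Fin (d + 1)) (Fin (d + 1)) ℝ)
    (hAdef : ∀ i j, A i j = if i = j then 0 else 1 / (d : ℝ))
    (hQA : QuantumImpl d (d + 1) (d + 1) A) :
    ¬ ∃ (p q : ℕ) (C : Matrix (Fin p) (Fin q) ℝ),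
        RowStochastic C ∧ QuantumImpl d p q C ∧
        UWMaj (1 : Matrix (Fin d) (Fin d) ℝ) C ∧ UWMaj A C :=
  id_and_antidist_incompatible_general d hd A hAdef
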